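/- Fix positive reals d1, d2, d3, d4 and angles α1, α2, α3, α4 ∈ (0, π) satisfying the rhomboid condition: either (α1 = α3 and α2 = α4) or (α1 + α3 = π and α2 + α4 = π), together with cos²α1 ≠ cos²α2. Consider the set of tuples (v, w1, w2, w3, w4) of points of ℝ³ with dist(v, w_i) = d_i and ∠ w_i v w_{i+1} = α_i for all i (indices mod 4). Then the subset of flat tuples — those in which all five points are coplanar — is nonempty and is partitioned by congruence (simultaneous application of one isometry of ℝ³ to all five points) into exactly two classes. -/

import Mathlib

open EuclideanGeometry

noncomputable section

abbrev Pt : Type := EuclideanSpace ℝ (Fin 3)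

abbrev PyrTuple : Type := Pt × (ZMod 4 → Pt)

def pyrSet (d α : ZMod 4 → ℝ) : Set PyrTuple :=
  {t | ∀ i : ZMod 4, dist t.1 (t.2 i) = d i ∧ ∠ (t.2 i) t.1 (t.2 (i + 1)) = α i}

def IsFlat (t : PyrTuple) : Prop :=
  Coplanar ℝ ({t.1, t.2 0, t.2 1, t.2 2, t.2 3} : Set Pt)

def PyrCongruent (t₁ t₂ : PyrTuple) : Prop :=
  ∃ σ : Pt ≃ᵢ Pt, σ t₁.1 = t₂.1 ∧ ∀ i, σ (t₁.2 i) = t₂.2 i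

/-!
An isometry moves a flat realization into the plane `z = 0` with the apex at the origin. There
the base points are `d i (cos ψ i, sin ψ i, 0)`, and the angle conditions say
`ψ i - ψ (i + 1) ≡ e i * α i (mod 2π)` for signs `e i = ±1`. Going once around the cycle gives
`∑ e i * α i ≡ 0`. Under the rhomboid condition, if `e 2` had the wrong sign relative to `e 0`,
this would read `2 e 0 * α 0 + m * α 1 ≡ 0` with `m ∈ {0, ±2}`, so
`cos (2 α 0) ∈ {1, cos (2 α 1)}`, which `α 0 ∈ (0, π)` and `cos² α 0 ≠ cos² α 1` exclude. Hence,
after a rotation or reflection of the plane, only the relative sign `ε = e 0 * e 1` is free. The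
two values of `ε` give realizations with different distances between `w 0` and `w 2`, since this
distance involves `cos (α 0 + ε α 1)`.
-/

open RealInnerProductSpace Real

lemma coplanar_of_subset_submodule {k V : Type*} [DivisionRing k] [AddCommGroup V] [Module k V]
    {K : Submodule k V} (hK : Module.rank k K ≤ 2) {s : Set V} (hs : s ⊆ K) : Coplanar k s := by
  refine le_trans (Submodule.rank_mono ?_) hK
  exact (vectorSpan_mono k hs).trans_eq K.toAffineSubspace_direction

lemma exists_linearIsometryEquiv_inner_eq_zero {E : Type*} [NormedAddCommGroup E]
    [InnerProductSpace ℝ E] [FiniteDimensional ℝ E] {V : Submodule ℝ E}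
    (hV : Module.finrank ℝ V < Module.finrank ℝ E) (e : E) :
    ∃ L : E ≃ₗᵢ[ℝ] E, ∀ x ∈ V, ⟪e, L x⟫ = 0 := by
  obtain ⟨w, hw, hw0⟩ : ∃ w ∈ Vᗮ, w ≠ 0 := by
    refine Submodule.exists_mem_ne_zero_of_ne_bot fun h => ?_
    have := V.finrank_add_finrank_orthogonal
    rw [h, finrank_bot] at this
    omega
  set u : E := (‖e‖ / ‖w‖) • w
  have hu : ‖u‖ = ‖e‖ := by
    simp [u, norm_smul, div_mul_cancel₀ _ (norm_ne_zero_iff.2 hw0)]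
  refine ⟨(ℝ ∙ (u - e))ᗮ.reflection, fun x hx => ?_⟩
  calc ⟪e, _⟫ = ⟪(ℝ ∙ (u - e))ᗮ.reflection u, (ℝ ∙ (u - e))ᗮ.reflection x⟫ := by
        rw [Submodule.reflection_sub hu]
    _ = ⟪u, x⟫ := LinearIsometryEquiv.inner_map_map _ _ _
    _ = 0 := by
        rw [real_inner_smul_left, Submodule.inner_left_of_mem_orthogonal hx hw, mul_zero]

def xyPlane : Submodule ℝ Pt := (ℝ ∙ EuclideanSpace.single 2 1)ᗮ

lemma mem_xyPlane {p : Pt} : p ∈ xyPlane ↔ p 2 = 0 := by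
  simp [xyPlane, Submodule.mem_orthogonal_singleton_iff_inner_right,
    EuclideanSpace.inner_single_left]

lemma rank_xyPlane : Module.rank ℝ xyPlane ≤ 2 := by
  have : Fact (Module.finrank ℝ Pt = 2 + 1) := ⟨by simp⟩
  rw [← Module.finrank_eq_rank, xyPlane,
    Submodule.finrank_orthogonal_span_singleton (n := 2) (by simp)]
  simp

def polarPt (r θ : ℝ) : Pt := !₂[r * cos θ, r * sin θ, 0]

lemma polarPt_mem_xyPlane (r θ : ℝ) : polarPt r θ ∈ xyPlane := mem_xyPlane.2 rfl

lemma inner_polarPt (r θ r' θ' : ℝ) :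
    ⟪polarPt r θ, polarPt r' θ'⟫ = r * r' * cos (θ - θ') := by
  simp [polarPt, PiLp.inner_apply, Fin.sum_univ_three, cos_sub]
  ring

lemma norm_polarPt {r : ℝ} (hr : 0 ≤ r) (θ : ℝ) : ‖polarPt r θ‖ = r := by
  rw [norm_eq_sqrt_real_inner, inner_polarPt, sub_self, cos_zero, mul_one, sqrt_mul_self hr]

lemma dist_polarPt_sq {r r' : ℝ} (hr : 0 ≤ r) (hr' : 0 ≤ r') (θ θ' : ℝ) :
    dist (polarPt r θ) (polarPt r' θ') ^ 2 = r ^ 2 + r' ^ 2 - 2 * r * r' * cos (θ - θ') := by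
  rw [dist_eq_norm, norm_sub_sq_real, inner_polarPt, norm_polarPt hr, norm_polarPt hr']
  ring

lemma polarPt_add_int_mul_two_pi (r θ : ℝ) (k : ℤ) :
    polarPt r (θ + k * (2 * π)) = polarPt r θ := by
  simp [polarPt, cos_add_int_mul_two_pi, sin_add_int_mul_two_pi]

lemma exists_eq_polarPt {q : Pt} (hq : q ∈ xyPlane) : ∃ θ, q = polarPt ‖q‖ θ := by
  set z : ℂ := ⟨q 0, q 1⟩
  have hz : ‖z‖ = ‖q‖ := by
    rw [EuclideanSpace.norm_eq, Complex.norm_def, Complex.normSq_mk, Fin.sum_univ_three,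
      mem_xyPlane.1 hq]
    simp [sq]
  refine ⟨z.arg, ?_⟩
  ext i
  fin_cases i
  · simp [polarPt, ← hz, Complex.norm_mul_cos_arg, z]
  · simp [polarPt, ← hz, Complex.norm_mul_sin_arg, z]
  · exact mem_xyPlane.1 hq

lemma reflection_polarPt (a r θ : ℝ) :
    (ℝ ∙ polarPt 1 a).reflection (polarPt r θ) = polarPt r (2 * a - θ) := by
  rw [Submodule.reflection_apply, Submodule.starProjection_singleton, inner_polarPt,
    norm_polarPt zero_le_one]
  have hcos := cos_add a (a - θ)
  have hsin := sin_add a (a - θ)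
  rw [show a + (a - θ) = 2 * a - θ by ring] at hcos hsin
  have hcos' := cos_sub a (a - θ)
  have hsin' := sin_sub a (a - θ)
  rw [sub_sub_cancel] at hcos' hsin'
  ext i
  fin_cases i
  · simp [polarPt, hcos, hcos']; ring
  · simp [polarPt, hsin, hsin']; ring
  · simp [polarPt]

namespace PyrCongruent

variable {t₁ t₂ t₃ : PyrTuple}

lemma symm (h : PyrCongruent t₁ t₂) : PyrCongruent t₂ t₁ := by
  obtain ⟨σ, hv, hw⟩ := h
  exact ⟨σ.symm, by rw [← hv, σ.symm_apply_apply], fun i => by rw [← hw i, σ.symm_apply_apply]⟩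

lemma trans (h : PyrCongruent t₁ t₂) (h' : PyrCongruent t₂ t₃) : PyrCongruent t₁ t₃ := by
  obtain ⟨σ, hv, hw⟩ := h
  obtain ⟨τ, hv', hw'⟩ := h'
  exact ⟨σ.trans τ, by simp [hv, hv'], fun i => by simp [hw i, hw' i]⟩

lemma mem_pyrSet {d α : ZMod 4 → ℝ} (h : PyrCongruent t₁ t₂) (ht : t₁ ∈ pyrSet d α) :
    t₂ ∈ pyrSet d α := by
  obtain ⟨σ, hv, hw⟩ := h
  have hangle (a b c : Pt) : ∠ (σ a) (σ b) (σ c) = ∠ a b c := by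
    simpa using σ.toRealAffineIsometryEquiv.toAffineIsometry.angle_map a b c
  intro i
  rw [← hv, ← hw i, ← hw (i + 1), σ.dist_eq, hangle]
  exact ht i

end PyrCongruent

def polarTuple (d ψ : ZMod 4 → ℝ) : PyrTuple := (0, fun i => polarPt (d i) (ψ i))

lemma cos_angle_polarPt {r r' : ℝ} (hr : 0 < r) (hr' : 0 < r') (θ θ' : ℝ) :
    cos (InnerProductGeometry.angle (polarPt r θ) (polarPt r' θ')) = cos (θ - θ') := by
  rw [InnerProductGeometry.cos_angle, inner_polarPt, norm_polarPt hr.le, norm_polarPt hr'.le]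
  field_simp

lemma polarTuple_mem_pyrSet_iff {d α : ZMod 4 → ℝ} (hd : ∀ i, 0 < d i)
    (hα : ∀ i, α i ∈ Set.Icc 0 π) (ψ : ZMod 4 → ℝ) :
    polarTuple d ψ ∈ pyrSet d α ↔ ∀ i, cos (ψ i - ψ (i + 1)) = cos (α i) := by
  refine forall_congr' fun i => ?_
  have hangle : ∠ (polarPt (d i) (ψ i)) 0 (polarPt (d (i + 1)) (ψ (i + 1))) = α i ↔
      cos (ψ i - ψ (i + 1)) = cos (α i) := by
    rw [← cos_angle_polarPt (hd i) (hd (i + 1)), EuclideanGeometry.angle, vsub_eq_sub,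
      vsub_eq_sub, sub_zero, sub_zero]
    exact (injOn_cos.eq_iff ⟨InnerProductGeometry.angle_nonneg _ _,
      InnerProductGeometry.angle_le_pi _ _⟩ (hα i)).symm
  simp [polarTuple, norm_polarPt (hd i).le, hangle]

lemma isFlat_polarTuple (d ψ : ZMod 4 → ℝ) : IsFlat (polarTuple d ψ) := by
  refine coplanar_of_subset_submodule rank_xyPlane ?_
  rintro p (rfl | rfl | rfl | rfl | rfl)
  · exact xyPlane.zero_mem
  all_goals exact polarPt_mem_xyPlane _ _

lemma pyrCongruent_polarTuple_two_mul_sub (d θ : ZMod 4 → ℝ) (a : ℝ) :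
    PyrCongruent (polarTuple d θ) (polarTuple d fun i => 2 * a - θ i) :=
  ⟨(ℝ ∙ polarPt 1 a).reflection.toIsometryEquiv,
    (ℝ ∙ polarPt 1 a).reflection.map_zero,
    fun i => reflection_polarPt a (d i) (θ i)⟩

lemma pyrCongruent_polarTuple_of_eq_mul_add {d θ ψ : ZMod 4 → ℝ} {s c : ℝ} (hs : s = 1 ∨ s = -1)
    (h : ∀ i, ∃ k : ℤ, ψ i = s * θ i + c + k * (2 * π)) :
    PyrCongruent (polarTuple d θ) (polarTuple d ψ) := by
  have hψ : polarTuple d ψ = polarTuple d fun i => s * θ i + c := by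
    refine Prod.ext rfl (funext fun i => ?_)
    obtain ⟨k, hk⟩ := h i
    simp only [polarTuple, hk, polarPt_add_int_mul_two_pi]
  rw [hψ]
  rcases hs with rfl | rfl
  -- the rotation by `c` is the product of the reflections in the lines at angles `0` and `c / 2`
  · convert (pyrCongruent_polarTuple_two_mul_sub d θ 0).trans
      (pyrCongruent_polarTuple_two_mul_sub d _ (c / 2)) using 4
    ring
  · convert pyrCongruent_polarTuple_two_mul_sub d θ (c / 2) using 4
    ring

lemma exists_isometryEquiv_mapsTo_xyPlane {S : Set Pt} (hS : Coplanar ℝ S) {v : Pt}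
    (hv : v ∈ S) : ∃ σ : Pt ≃ᵢ Pt, σ v = 0 ∧ ∀ p ∈ S, σ p ∈ xyPlane := by
  have hrank : Module.finrank ℝ (vectorSpan ℝ S) < Module.finrank ℝ Pt := by
    have := hS.finrank_le_two
    simp only [finrank_euclideanSpace, Fintype.card_fin]
    omega
  obtain ⟨L, hL⟩ := exists_linearIsometryEquiv_inner_eq_zero hrank (EuclideanSpace.single 2 1)
  refine ⟨(IsometryEquiv.subRight v).trans L.toIsometryEquiv, by simp, fun p hp => ?_⟩
  rw [xyPlane, Submodule.mem_orthogonal_singleton_iff_inner_right]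
  exact hL _ (vsub_mem_vectorSpan ℝ hp hv)

lemma exists_pyrCongruent_polarTuple {d : ZMod 4 → ℝ} {t : PyrTuple}
    (hdist : ∀ i, dist t.1 (t.2 i) = d i) (hflat : IsFlat t) :
    ∃ ψ, PyrCongruent t (polarTuple d ψ) := by
  obtain ⟨σ, hσv, hσ⟩ := exists_isometryEquiv_mapsTo_xyPlane hflat (Set.mem_insert _ _)
  have hw : ∀ i, ∃ θ, σ (t.2 i) = polarPt (d i) θ := by
    intro i
    have hmem : t.2 i ∈ ({t.1, t.2 0, t.2 1, t.2 2, t.2 3} : Set Pt) := by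
      rcases (by decide : ∀ j : ZMod 4, j = 0 ∨ j = 1 ∨ j = 2 ∨ j = 3) i with
        rfl | rfl | rfl | rfl <;> simp
    obtain ⟨θ, hθ⟩ := exists_eq_polarPt (hσ _ hmem)
    refine ⟨θ, hθ.trans ?_⟩
    rw [← dist_zero_right, ← hσv, σ.dist_eq, dist_comm, hdist]
  choose ψ hψ using hw
  exact ⟨ψ, σ, hσv, hψ⟩

lemma exists_sign_of_cos_eq_cos {x y : ℝ} (h : cos x = cos y) :
    ∃ e : ℝ, (e = 1 ∨ e = -1) ∧ ∃ k : ℤ, x = e * y + k * (2 * π) := by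
  obtain ⟨k, hk | hk⟩ := cos_eq_cos_iff.1 h.symm
  · exact ⟨1, .inl rfl, k, by linarith⟩
  · exact ⟨-1, .inr rfl, k, by linarith⟩

lemma two_mul_add_ne_int_mul_two_pi {a b : ℝ} (ha : a ∈ Set.Ioo 0 π)
    (hab : cos a ^ 2 ≠ cos b ^ 2) {e m : ℝ} (he : e = 1 ∨ e = -1) (hm : m = 2 ∨ m = 0 ∨ m = -2)
    (k : ℤ) : 2 * e * a + m * b ≠ k * (2 * π) := by
  intro h
  have hcos : cos (2 * a) = cos (m * b) := by
    have : cos (2 * e * a) = cos (2 * a) := by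
      rcases he with rfl | rfl
      · rw [mul_one]
      · rw [show 2 * -1 * a = -(2 * a) by ring, cos_neg]
    rw [← this, show 2 * e * a = k * (2 * π) - m * b by linarith, cos_int_mul_two_pi_sub]
  have hsin : 0 < sin a := sin_pos_of_pos_of_lt_pi ha.1 ha.2
  rw [cos_two_mul] at hcos
  rcases hm with rfl | rfl | rfl
  · exact hab (by rw [cos_two_mul] at hcos; linarith)
  · rw [zero_mul, cos_zero] at hcos
    nlinarith [sin_sq_add_cos_sq a]
  · exact hab (by rw [show -2 * b = -(2 * b) by ring, cos_neg, cos_two_mul] at hcos; linarith)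

/-- `δ = -1` encodes `α 2 = α 0` and `δ = 1` encodes `α 2 = π - α 0`; in both cases the closing
step from `θ 3` back to `θ 0` is then `± α 3` by the rhomboid condition. -/
def rhomboidAngles (α : ZMod 4 → ℝ) (δ ε : ℝ) : ZMod 4 → ℝ :=
  ![0, α 0, α 0 + ε * α 1, α 0 + ε * α 1 + δ * α 2]

section Rhomboid

variable {α : ZMod 4 → ℝ} {δ : ℝ}

lemma cos_rhomboidAngles_sub
    (hδ : (δ = -1 ∧ α 0 = α 2 ∧ α 1 = α 3) ∨ (δ = 1 ∧ α 0 + α 2 = π ∧ α 1 + α 3 = π))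
    {ε : ℝ} (hε : ε = 1 ∨ ε = -1) (i : ZMod 4) :
    cos (rhomboidAngles α δ ε i - rhomboidAngles α δ ε (i + 1)) = cos (α i) := by
  have hsucc : (0 : ZMod 4) + 1 = 1 ∧ (1 : ZMod 4) + 1 = 2 ∧ (2 : ZMod 4) + 1 = 3 ∧
    (3 : ZMod 4) + 1 = 0 := by decide
  have hcos : cos (ε * α 1) = cos (α 1) := by rcases hε with rfl | rfl <;> simp
  rcases (by decide : ∀ j : ZMod 4, j = 0 ∨ j = 1 ∨ j = 2 ∨ j = 3) i with rfl | rfl | rfl | rfl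
  · simp [rhomboidAngles, hsucc]
  · simp [rhomboidAngles, hsucc, hcos]
  · rcases hδ with ⟨rfl, -⟩ | ⟨rfl, -⟩ <;> simp [rhomboidAngles, hsucc]
  · rcases hδ with ⟨rfl, h2, h3⟩ | ⟨rfl, h2, h3⟩
    · simp [rhomboidAngles, hsucc, ← h2, ← h3, hcos]
    · rw [show α 3 = π - α 1 by linarith]
      simp [rhomboidAngles, hsucc, show α 0 + ε * α 1 + α 2 = ε * α 1 + π by linarith, hcos]

lemma sign_two_eq_of_rhomboid (hα₀ : α 0 ∈ Set.Ioo 0 π) (hnot : cos (α 0) ^ 2 ≠ cos (α 1) ^ 2)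
    (hδ : (δ = -1 ∧ α 0 = α 2 ∧ α 1 = α 3) ∨ (δ = 1 ∧ α 0 + α 2 = π ∧ α 1 + α 3 = π))
    {e : ZMod 4 → ℝ} (he : ∀ i, e i = 1 ∨ e i = -1) {k : ℤ}
    (hsum : e 0 * α 0 + e 1 * α 1 + e 2 * α 2 + e 3 * α 3 = k * (2 * π)) :
    e 2 = δ * e 0 := by
  by_contra hne
  have he2 : e 2 = -(δ * e 0) := by
    rcases hδ with ⟨rfl, -⟩ | ⟨rfl, -⟩ <;> rcases he 0 with h0 | h0 <;>
      rcases he 2 with h2 | h2 <;> simp_all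
  have hm (f g : ℝ) (hf : f = 1 ∨ f = -1) (hg : g = 1 ∨ g = -1) :
      f + g = 2 ∨ f + g = 0 ∨ f + g = -2 := by
    rcases hf with rfl | rfl <;> rcases hg with rfl | rfl <;> norm_num
  rcases hδ with ⟨rfl, h2, h3⟩ | ⟨rfl, h2, h3⟩
  · refine two_mul_add_ne_int_mul_two_pi hα₀ hnot (he 0) (hm _ _ (he 1) (he 3)) k ?_
    rw [← h2, ← h3, he2] at hsum
    linarith
  · obtain ⟨j, hj⟩ : ∃ j : ℤ, e 3 - e 0 = 2 * j := by
      rcases he 0 with h | h <;> rcases he 3 with h' | h' <;> rw [h, h']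
      exacts [⟨0, by norm_num⟩, ⟨-1, by norm_num⟩, ⟨1, by norm_num⟩, ⟨0, by norm_num⟩]
    refine two_mul_add_ne_int_mul_two_pi hα₀ hnot (he 0)
      (hm (e 1) (-e 3) (he 1) (by rcases he 3 with h | h <;> simp [h])) (k - j) ?_
    rw [show α 2 = π - α 0 by linarith, show α 3 = π - α 1 by linarith, he2] at hsum
    push_cast
    linear_combination hsum - π * hj

lemma exists_eq_rhomboidAngles (hα₀ : α 0 ∈ Set.Ioo 0 π)
    (hnot : cos (α 0) ^ 2 ≠ cos (α 1) ^ 2)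
    (hδ : (δ = -1 ∧ α 0 = α 2 ∧ α 1 = α 3) ∨ (δ = 1 ∧ α 0 + α 2 = π ∧ α 1 + α 3 = π))
    {ψ : ZMod 4 → ℝ} (hψ : ∀ i, cos (ψ i - ψ (i + 1)) = cos (α i)) :
    ∃ ε s c : ℝ, (ε = 1 ∨ ε = -1) ∧ (s = 1 ∨ s = -1) ∧
      ∀ i, ∃ k : ℤ, ψ i = s * rhomboidAngles α δ ε i + c + k * (2 * π) := by
  have hsucc : (0 : ZMod 4) + 1 = 1 ∧ (1 : ZMod 4) + 1 = 2 ∧ (2 : ZMod 4) + 1 = 3 ∧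
    (3 : ZMod 4) + 1 = 0 := by decide
  choose e he k hk using fun i => exists_sign_of_cos_eq_cos (hψ i)
  obtain ⟨h0, h1, h2, h3⟩ := And.intro (hk 0) (And.intro (hk 1) (And.intro (hk 2) (hk 3)))
  simp only [hsucc] at h0 h1 h2 h3
  have he2 : e 2 = δ * e 0 := sign_two_eq_of_rhomboid hα₀ hnot hδ he
    (k := -(k 0 + k 1 + k 2 + k 3)) (by push_cast; linear_combination -(h0 + h1 + h2 + h3))
  have he0 : e 0 * e 0 = 1 := by rcases he 0 with h | h <;> rw [h] <;> norm_num
  refine ⟨e 0 * e 1, -e 0, ψ 0, ?_, by rcases he 0 with h | h <;> simp [h],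
    fun i => ?_⟩
  · rcases he 0 with h | h <;> rcases he 1 with h' | h' <;> rw [h, h'] <;> norm_num
  rcases (by decide : ∀ j : ZMod 4, j = 0 ∨ j = 1 ∨ j = 2 ∨ j = 3) i with rfl | rfl | rfl | rfl
  · exact ⟨0, by simp [rhomboidAngles]⟩
  · exact ⟨-k 0, by simp [rhomboidAngles]; linear_combination -h0⟩
  · exact ⟨-(k 0 + k 1), by
      simp [rhomboidAngles]; linear_combination -h0 - h1 + e 1 * α 1 * he0⟩
  · exact ⟨-(k 0 + k 1 + k 2), by
      simp [rhomboidAngles]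
      linear_combination -h0 - h1 - h2 + e 1 * α 1 * he0 - α 2 * he2⟩

end Rhomboid

lemma not_pyrCongruent_polarTuple_rhomboidAngles {d α : ZMod 4 → ℝ} (hd : ∀ i, 0 < d i)
    (hα₀ : α 0 ∈ Set.Ioo 0 π) (hα₁ : α 1 ∈ Set.Ioo 0 π) (δ : ℝ) :
    ¬ PyrCongruent (polarTuple d (rhomboidAngles α δ 1))
      (polarTuple d (rhomboidAngles α δ (-1))) := by
  rintro ⟨σ, -, hσ⟩
  set θp := rhomboidAngles α δ 1
  set θm := rhomboidAngles α δ (-1)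
  have hdist : dist ((polarTuple d θm).2 0) ((polarTuple d θm).2 2) =
      dist ((polarTuple d θp).2 0) ((polarTuple d θp).2 2) := by
    rw [← hσ 0, ← hσ 2]
    exact σ.dist_eq _ _
  have hsq := congrArg (· ^ 2) hdist
  simp only [polarTuple, dist_polarPt_sq (hd 0).le (hd 2).le] at hsq
  have hcos : cos (α 0 + α 1) = cos (α 0 - α 1) := by
    simp [θp, θm, rhomboidAngles, (hd 0).ne', (hd 2).ne'] at hsq
    rw [show α 1 + -α 0 = -(α 0 - α 1) by ring, show -α 1 + -α 0 = -(α 0 + α 1) by ring,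
      cos_neg, cos_neg] at hsq
    exact hsq.symm
  rw [cos_add, cos_sub] at hcos
  nlinarith [sin_pos_of_pos_of_lt_pi hα₀.1 hα₀.2, sin_pos_of_pos_of_lt_pi hα₁.1 hα₁.2]

/-- Flat realizations of a rhomboid: for fixed positive distances `d i` and apex angles
`α i ∈ (0, π)` satisfying the rhomboid condition (`(α₁, α₃)` and `(α₂, α₄)` each equal
or supplementary) and `cos² α₁ ≠ cos² α₂`, the set of flat pyramid tuples is nonempty
and is partitioned by congruence into exactly two classes. -/
theorem rhomboid_flat_realizations
    (d α : ZMod 4 → ℝ)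
    (hd : ∀ i, 0 < d i)
    (hα : ∀ i, α i ∈ Set.Ioo 0 Real.pi)
    (hrhomboid : (α 0 = α 2 ∧ α 1 = α 3) ∨ (α 0 + α 2 = Real.pi ∧ α 1 + α 3 = Real.pi))
    (hnot : Real.cos (α 0) ^ 2 ≠ Real.cos (α 1) ^ 2) :
    (∃ t ∈ pyrSet d α, IsFlat t) ∧
    (∃ t₁ t₂, t₁ ∈ pyrSet d α ∧ IsFlat t₁ ∧ t₂ ∈ pyrSet d α ∧ IsFlat t₂ ∧
      ¬ PyrCongruent t₁ t₂ ∧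
      ∀ t ∈ pyrSet d α, IsFlat t → (PyrCongruent t t₁ ∨ PyrCongruent t t₂)) := by
  obtain ⟨δ, hδ⟩ : ∃ δ : ℝ, (δ = -1 ∧ α 0 = α 2 ∧ α 1 = α 3) ∨
      (δ = 1 ∧ α 0 + α 2 = π ∧ α 1 + α 3 = π) := by
    rcases hrhomboid with h | h
    exacts [⟨-1, .inl ⟨rfl, h⟩⟩, ⟨1, .inr ⟨rfl, h⟩⟩]
  have hpolar := polarTuple_mem_pyrSet_iff hd fun i => Set.Ioo_subset_Icc_self (hα i)
  have hmem {ε : ℝ} (hε : ε = 1 ∨ ε = -1) : polarTuple d (rhomboidAngles α δ ε) ∈ pyrSet d α :=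
    (hpolar _).2 (cos_rhomboidAngles_sub hδ hε)
  refine ⟨⟨_, hmem (.inl rfl), isFlat_polarTuple _ _⟩, _, _, hmem (.inl rfl),
    isFlat_polarTuple _ _, hmem (.inr rfl), isFlat_polarTuple _ _,
    not_pyrCongruent_polarTuple_rhomboidAngles hd (hα 0) (hα 1) δ, fun t ht hflat => ?_⟩
  obtain ⟨ψ, htψ⟩ := exists_pyrCongruent_polarTuple (fun i => (ht i).1) hflat
  obtain ⟨ε, s, c, hε, hs, hψ⟩ :=
    exists_eq_rhomboidAngles (hα 0) hnot hδ ((hpolar ψ).1 (htψ.mem_pyrSet ht))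
  have htε := htψ.trans (pyrCongruent_polarTuple_of_eq_mul_add hs hψ).symm
  rcases hε with rfl | rfl
  exacts [.inl htε, .inr htε]
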